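/- Let n ≥ 2, let p be a prime, let Γ be a group with subgroups K_0,…,K_n whose union generates Γ, and let N be a normal subgroup of Γ that is generated by a set of elements each of order p. Let Λ be a group containing no nontrivial element of order p. If H^1(CC(Γ,{K_i}),Λ) = 0, then H^1(CC(Γ/N, {images of K_i in Γ/N}),Λ) = 0, i.e., every Λ-valued 1-cocycle on the coset complex of Γ/N with respect to the images of the K_i is a 1-coboundary. -/

import Mathlib

/-- The vertices of the coset complex `CC(Γ, {K_0,…,K_n})`: left cosets `gK_i`. -/
def ccVert {Γ : Type*} [Group Γ] {n : ℕ} (K : Fin (n + 1) → Subgroup Γ) :=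
  Σ i : Fin (n + 1), Γ ⧸ K i

/-- Two vertices of the coset complex are adjacent (span an edge) iff they have different
colors and the corresponding cosets intersect nontrivially; simplices of the coset complex
are sets of pairwise adjacent vertices. -/
def ccAdj {Γ : Type*} [Group Γ] {n : ℕ} (K : Fin (n + 1) → Subgroup Γ) :
    ccVert K → ccVert K → Prop := fun u v =>
  u.1 ≠ v.1 ∧ ∃ g : Γ,
    (QuotientGroup.mk g : Γ ⧸ K u.1) = u.2 ∧ (QuotientGroup.mk g : Γ ⧸ K v.1) = v.2

/-- `H¹(X, Λ) = 0` for the complex whose edges are given by `Adj` and whose `2`-simplices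
are the triples of pairwise adjacent vertices: every `Λ`-valued `1`-cocycle is a
`1`-coboundary. -/
def H1Trivial {V : Type*} (Adj : V → V → Prop) (Λ : Type*) [Group Λ] : Prop :=
  ∀ φ : V → V → Λ,
    (∀ u v, Adj u v → φ u v = (φ v u)⁻¹) →
    (∀ u v w, Adj u v → Adj v w → Adj u w → φ u v * φ v w * φ w u = 1) →
    ∃ ψ : V → Λ, ∀ u v, Adj u v → φ u v = ψ u * (ψ v)⁻¹

/-! Pull a cocycle on the coset complex of `Γ/N` back to that of `Γ` and write it there as the
coboundary of `ψ`. Since `N` acts trivially on the quotient complex, for `m ∈ N` the translate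
`u ↦ ψ (m • u)` is a primitive of the same cocycle, so on the complex, which is connected because
the `K i` generate `Γ`, it differs from `ψ` by a constant `c m ∈ Λ`. For a generator `s` of `N`
of order `p` this gives `c s ^ p = 1`, hence `c s = 1` as `Λ` has no elements of order `p`. So
`ψ` is `N`-invariant, hence constant on the fibres of the projection, and it descends to a
primitive of the original cocycle because every edge of the quotient complex lifts. -/

open Relation

section Primitive

variable {V Λ : Type*} [Group Λ]

lemma Relation.ReflTransGen.inv_mul_apply_eq {r : V → V → Prop} {ψ : V → Λ} {σ : V → V}
    (hσ : ∀ u v, r u v → ψ (σ u) * (ψ (σ v))⁻¹ = ψ u * (ψ v)⁻¹) {u v : V}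
    (huv : ReflTransGen r u v) : (ψ u)⁻¹ * ψ (σ u) = (ψ v)⁻¹ * ψ (σ v) := by
  induction huv with
  | refl => rfl
  | tail _ hbc ih =>
    rw [ih, mul_inv_eq_iff_eq_mul.mp (hσ _ _ hbc)]
    group

variable {G : Type*} [Group G] [MulAction G V]

lemma apply_pow_smul_eq_mul_pow {ψ : V → Λ} {g : G} {c : Λ} (h : ∀ u, ψ (g • u) = ψ u * c)
    (k : ℕ) (u : V) : ψ (g ^ k • u) = ψ u * c ^ k := by
  induction k generalizing u with
  | zero => simp
  | succ k ih => rw [pow_succ, mul_smul, ih, h, pow_succ', mul_assoc]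

lemma apply_smul_eq_of_pow_prime_eq_one {r : V → V → Prop}
    (hconn : ∀ u v, ReflTransGen r u v) {ψ : V → Λ} {g : G}
    (hg : ∀ u v, r u v → ψ (g • u) * (ψ (g • v))⁻¹ = ψ u * (ψ v)⁻¹)
    {p : ℕ} (hp : p.Prime) (hgp : g ^ p = 1) (hΛ : ∀ x : Λ, x ≠ 1 → orderOf x ≠ p) (u : V) :
    ψ (g • u) = ψ u := by
  set c := (ψ u)⁻¹ * ψ (g • u)
  have hc : ∀ v, ψ (g • v) = ψ v * c := fun v =>
    inv_mul_eq_iff_eq_mul.mp ((hconn v u).inv_mul_apply_eq hg)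
  have hcp : c ^ p = 1 := by
    simpa [hgp] using apply_pow_smul_eq_mul_pow hc p u
  have hc1 : c = 1 := by
    by_contra hne
    have := Fact.mk hp
    exact hΛ c hne (orderOf_eq_prime hcp hne)
  rw [hc, hc1, mul_one]

lemma apply_smul_eq_of_mem_closure {α : Type*} {ψ : V → α} {S : Set G}
    (hS : ∀ s ∈ S, ∀ u, ψ (s • u) = ψ u) {m : G} (hm : m ∈ Subgroup.closure S) (u : V) :
    ψ (m • u) = ψ u := by
  induction hm using Subgroup.closure_induction generalizing u with
  | mem s hs => exact hS s hs u
  | one => rw [one_smul]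
  | mul a b _ _ iha ihb => rw [mul_smul, iha, ihb]
  | inv a _ iha => rw [← iha (a⁻¹ • u), smul_inv_smul]

end Primitive

namespace ccVert

variable {Γ Γ' : Type*} [Group Γ] [Group Γ'] {n : ℕ} {K : Fin (n + 1) → Subgroup Γ}

def mk (i : Fin (n + 1)) (g : Γ) : ccVert K := ⟨i, (g : Γ ⧸ K i)⟩

lemma mk_surjective (u : ccVert K) : ∃ i g, mk i g = u := by
  obtain ⟨i, x⟩ := u
  obtain ⟨g, rfl⟩ := QuotientGroup.mk_surjective x
  exact ⟨i, g, rfl⟩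

lemma mk_eq_mk_iff {i : Fin (n + 1)} {g h : Γ} : (mk i g : ccVert K) = mk i h ↔ g⁻¹ * h ∈ K i :=
  ⟨fun heq => QuotientGroup.eq.mp (eq_of_heq (Sigma.mk.inj_iff.mp heq).2),
    fun hmem => congrArg (Sigma.mk i) (QuotientGroup.eq.mpr hmem)⟩

instance : MulAction Γ (ccVert K) := inferInstanceAs (MulAction Γ (Σ i, Γ ⧸ K i))

lemma smul_mk (g h : Γ) (i : Fin (n + 1)) : g • (mk i h : ccVert K) = mk i (g * h) := rfl

def map (f : Γ →* Γ') : ccVert K → ccVert fun i => (K i).map f :=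
  Sigma.map id fun _ => Quotient.map' f fun a b h => by
    rw [QuotientGroup.leftRel_apply] at h ⊢
    exact ⟨a⁻¹ * b, h, by simp⟩

lemma map_mk (f : Γ →* Γ') (i : Fin (n + 1)) (g : Γ) : map f (mk i g : ccVert K) = mk i (f g) :=
  rfl

lemma map_smul_of_mem_ker {f : Γ →* Γ'} {m : Γ} (hm : m ∈ f.ker) (u : ccVert K) :
    map f (m • u) = map f u := by
  obtain ⟨i, g, rfl⟩ := mk_surjective u
  rw [smul_mk, map_mk, map_mk, map_mul, f.mem_ker.mp hm, one_mul]

lemma exists_mem_ker_smul_eq {f : Γ →* Γ'} {u u' : ccVert K} (h : map f u = map f u') :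
    ∃ m ∈ f.ker, m • u = u' := by
  obtain ⟨i, g, rfl⟩ := mk_surjective u
  obtain ⟨i', g', rfl⟩ := mk_surjective u'
  obtain rfl : i = i' := congrArg Sigma.fst h
  rw [map_mk, map_mk, mk_eq_mk_iff, ← map_inv, ← map_mul, ← Subgroup.mem_comap,
    Subgroup.comap_map_eq, sup_comm, Subgroup.mem_sup_of_normal_left] at h
  obtain ⟨y, hy, z, hz, hyz⟩ := h
  refine ⟨g * y * g⁻¹, f.normal_ker.conj_mem y hy g, ?_⟩
  rwa [smul_mk, mk_eq_mk_iff, show (g * y * g⁻¹ * g)⁻¹ * g' = z by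
    rw [← mul_inv_eq_iff_eq_mul.mpr hyz.symm]; group]

end ccVert

namespace ccAdj

open ccVert

variable {Γ Γ' : Type*} [Group Γ] [Group Γ'] {n : ℕ} {K : Fin (n + 1) → Subgroup Γ}
  {u v : ccVert K}

lemma mk_mk {i j : Fin (n + 1)} (hij : i ≠ j) (g : Γ) : ccAdj K (mk i g) (mk j g) :=
  ⟨hij, g, rfl, rfl⟩

lemma exists_eq_mk_mk (h : ccAdj K u v) : ∃ i j g, i ≠ j ∧ mk i g = u ∧ mk j g = v := by
  obtain ⟨hne, g, hu, hv⟩ := h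
  exact ⟨u.1, v.1, g, hne, Sigma.ext rfl (heq_of_eq hu), Sigma.ext rfl (heq_of_eq hv)⟩

lemma symm (h : ccAdj K u v) : ccAdj K v u :=
  ⟨h.1.symm, h.2.imp fun _ hg => hg.symm⟩

instance : Std.Symm (ccAdj K) := ⟨fun _ _ => symm⟩

lemma smul (g : Γ) (h : ccAdj K u v) : ccAdj K (g • u) (g • v) := by
  obtain ⟨i, j, w, hij, rfl, rfl⟩ := h.exists_eq_mk_mk
  exact mk_mk hij (g * w)

lemma map (f : Γ →* Γ') (h : ccAdj K u v) : ccAdj _ (ccVert.map f u) (ccVert.map f v) := by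
  obtain ⟨i, j, w, hij, rfl, rfl⟩ := h.exists_eq_mk_mk
  exact mk_mk hij (f w)

lemma exists_lift {f : Γ →* Γ'} (hf : Function.Surjective f)
    {u' v' : ccVert fun i => (K i).map f} (h : ccAdj _ u' v') :
    ∃ u v, ccAdj K u v ∧ ccVert.map f u = u' ∧ ccVert.map f v = v' := by
  obtain ⟨i, j, w, hij, rfl, rfl⟩ := h.exists_eq_mk_mk
  obtain ⟨g, rfl⟩ := hf w
  exact ⟨mk i g, mk j g, mk_mk hij g, rfl, rfl⟩

lemma reflTransGen_mk_mk (g : Γ) (i j : Fin (n + 1)) :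
    ReflTransGen (ccAdj K) (mk i g) (mk j g) := by
  rcases eq_or_ne i j with rfl | hij
  · rfl
  · exact .single (mk_mk hij g)

theorem reflTransGen_of_closure_eq_top (hgen : Subgroup.closure (⋃ i, (K i : Set Γ)) = ⊤)
    (u v : ccVert K) : ReflTransGen (ccAdj K) u v := by
  have htrans : ∀ g (u v : ccVert K), ReflTransGen (ccAdj K) u v →
      ReflTransGen (ccAdj K) (g • u) (g • v) := fun g =>
    ReflTransGen.lift (g • ·) fun _ _ => smul g
  have hbase : ∀ g, ReflTransGen (ccAdj K) (mk 0 1) (mk 0 g) := by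
    intro g
    induction (hgen ▸ Subgroup.mem_top g : g ∈ Subgroup.closure _)
      using Subgroup.closure_induction with
    | mem x hx =>
      obtain ⟨j, hxj⟩ := Set.mem_iUnion.mp hx
      have hj : (mk j 1 : ccVert K) = mk j x := mk_eq_mk_iff.mpr (by simpa using hxj)
      exact (reflTransGen_mk_mk 1 0 j).trans (hj ▸ reflTransGen_mk_mk x j 0)
    | one => rfl
    | mul x y _ _ ihx ihy => exact ihx.trans (by simpa [smul_mk] using htrans x _ _ ihy)
    | inv x _ ihx => simpa [smul_mk] using htrans x⁻¹ _ _ (_root_.symm ihx)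
  have hall : ∀ w, ReflTransGen (ccAdj K) (mk 0 1) w := by
    intro w
    obtain ⟨i, g, rfl⟩ := mk_surjective w
    exact (hbase g).trans (reflTransGen_mk_mk g 0 i)
  exact (_root_.symm (hall u)).trans (hall v)

end ccAdj

theorem h1_trivial_quotient_cosetComplex_orderP_general {Γ : Type*} [Group Γ] (n p : ℕ)
    (hp : p.Prime)
    (K : Fin (n + 1) → Subgroup Γ)
    (hgen : Subgroup.closure (⋃ i, (K i : Set Γ)) = ⊤)
    (N : Subgroup Γ) [N.Normal]
    (hNgen : ∃ S : Set Γ, (∀ g ∈ S, orderOf g = p) ∧ Subgroup.closure S = N)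
    (Λ : Type*) [Group Λ] (hΛ : ∀ x : Λ, x ≠ 1 → orderOf x ≠ p)
    (hX : H1Trivial (ccAdj K) Λ) :
    H1Trivial (ccAdj fun i => (K i).map (QuotientGroup.mk' N)) Λ := by
  intro φ hsymm hcocycle
  let π : ccVert K → _ := ccVert.map (QuotientGroup.mk' N)
  obtain ⟨ψ, hψ⟩ := hX (fun u v => φ (π u) (π v)) (fun u v h => hsymm _ _ (h.map _))
    fun u v w huv hvw huw => hcocycle _ _ _ (huv.map _) (hvw.map _) (huw.map _)
  have hN : ∀ m ∈ N, ∀ u v, ccAdj K u v → ψ (m • u) * (ψ (m • v))⁻¹ = ψ u * (ψ v)⁻¹ := by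
    intro m hm u v huv
    have hπ : ∀ w, π (m • w) = π w :=
      ccVert.map_smul_of_mem_ker (by rwa [QuotientGroup.ker_mk'])
    rw [← hψ _ _ huv, ← hψ _ _ (huv.smul m), hπ, hπ]
  obtain ⟨S, hS, rfl⟩ := hNgen
  have hinv : ∀ m ∈ Subgroup.closure S, ∀ u, ψ (m • u) = ψ u :=
    fun _ => apply_smul_eq_of_mem_closure fun s hs =>
      apply_smul_eq_of_pow_prime_eq_one (ccAdj.reflTransGen_of_closure_eq_top hgen)
        (hN s (Subgroup.subset_closure hs)) hp (hS s hs ▸ pow_orderOf_eq_one s) hΛ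
  have hfac : Function.FactorsThrough ψ π := fun u u' h => by
    obtain ⟨m, hm, rfl⟩ := ccVert.exists_mem_ker_smul_eq h
    exact (hinv m (by rwa [QuotientGroup.ker_mk'] at hm) u).symm
  refine ⟨Function.extend π ψ 1, fun u' v' h => ?_⟩
  obtain ⟨u, v, huv, rfl, rfl⟩ := ccAdj.exists_lift (QuotientGroup.mk'_surjective _) h
  rw [hfac.extend_apply, hfac.extend_apply, ← hψ u v huv]

/-- Let `n ≥ 2`, `p` prime, `Γ` a group with subgroups `K_0,…,K_n` whose
union generates `Γ`, and `N ⊴ Γ` generated by a set of elements of order `p`.  If `Λ` has no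
nontrivial element of order `p` and `H¹(CC(Γ,{K_i}), Λ) = 0`, then
`H¹(CC(Γ/N, {images of K_i}), Λ) = 0`. -/
theorem h1_trivial_quotient_cosetComplex_orderP {Γ : Type*} [Group Γ] (n p : ℕ)
    (hn : 2 ≤ n) (hp : p.Prime)
    (K : Fin (n + 1) → Subgroup Γ)
    (hgen : Subgroup.closure (⋃ i, (K i : Set Γ)) = ⊤)
    (N : Subgroup Γ) [N.Normal]
    (hNgen : ∃ S : Set Γ, (∀ g ∈ S, orderOf g = p) ∧ Subgroup.closure S = N)
    (Λ : Type*) [Group Λ] (hΛ : ∀ x : Λ, x ≠ 1 → orderOf x ≠ p)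
    (hX : H1Trivial (ccAdj K) Λ) :
    H1Trivial (ccAdj fun i => (K i).map (QuotientGroup.mk' N)) Λ :=
  h1_trivial_quotient_cosetComplex_orderP_general n p hp K hgen N hNgen Λ hΛ hX
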